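/- Let φ₁, …, φ_m be pairwise classically inconsistent formulas and let Γ be the set of all disjunctions of exactly n distinct φᵢ's (0 < n < m). If a probability distribution P satisfies P(γ) > n/m for every γ ∈ Γ, then a contradiction follows; i.e., no probability distribution assigns every such n-fold disjunction probability strictly greater than n/m. -/

import Mathlib

/-- Propositional formulas: atoms, negation, disjunction. -/
inductive Fml : Type
  | atom : ℕ → Fml
  | neg : Fml → Fml
  | or : Fml → Fml → Fml
deriving DecidableEq

namespace Fml

def and (φ ψ : Fml) : Fml := neg (or (neg φ) (neg ψ))

def bot : Fml := and (atom 0) (neg (atom 0))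

def imp (φ ψ : Fml) : Fml := or (neg φ) ψ

def eval (v : ℕ → Bool) : Fml → Bool
  | atom n => v n
  | neg φ => !(eval v φ)
  | or φ ψ => (eval v φ) || (eval v ψ)

end Fml

/-- Two formulas are jointly classically unsatisfiable. -/
def Incompatible (φ ψ : Fml) : Prop :=
  ∀ v : ℕ → Bool, ¬(φ.eval v = true ∧ ψ.eval v = true)

/-- Classical (Set-Set) validity. -/
def ClValid (Γ Δ : Finset Fml) : Prop :=
  ∀ v : ℕ → Bool, (∀ γ ∈ Γ, γ.eval v = true) → ∃ δ ∈ Δ, δ.eval v = true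

/-- Classical single-conclusion entailment. -/
def ClEntails (Γ : Finset Fml) (φ : Fml) : Prop :=
  ∀ v : ℕ → Bool, (∀ γ ∈ Γ, γ.eval v = true) → φ.eval v = true

def ClConsistent (Γ : Finset Fml) : Prop :=
  ∃ v : ℕ → Bool, ∀ γ ∈ Γ, γ.eval v = true

def Tautology (φ : Fml) : Prop := ∀ v : ℕ → Bool, φ.eval v = true

/-- A probability distribution on formulas. -/
structure ProbDist where
  p : Fml → ℝ
  nonneg : ∀ φ, 0 ≤ p φ
  le_one : ∀ φ, p φ ≤ 1
  bot_eq : p Fml.bot = 0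
  neg_eq : ∀ φ, p (Fml.neg φ) = 1 - p φ
  add_eq : ∀ φ ψ, Incompatible φ ψ → p (Fml.or φ ψ) = p φ + p ψ

/-- A probabilistic model: worlds with classical valuations and a finitely
additive probability measure on subsets of worlds. -/
structure PModel where
  W : Type
  nonempty : Nonempty W
  val : W → ℕ → Bool
  μ : Set W → ℝ
  nonneg : ∀ A : Set W, 0 ≤ μ A
  empty_eq : μ (∅ : Set W) = 0
  univ_eq : μ (Set.univ : Set W) = 1
  add_eq : ∀ A B : Set W, Disjoint A B → μ (A ∪ B) = μ A + μ B

/-- Denotation of a formula in a model. -/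
def PModel.den (M : PModel) (φ : Fml) : Set M.W := {w | φ.eval (M.val w) = true}

/-- Induced probability of a formula in a model. -/
def PModel.prob (M : PModel) (φ : Fml) : ℝ := M.μ (M.den φ)

/-- An upset of [0,1]: contains 1, excludes 0, upward closed within [0,1]. -/
def IsUpset (α : Set ℝ) : Prop :=
  α ⊆ Set.Icc 0 1 ∧ (1 : ℝ) ∈ α ∧ (0 : ℝ) ∉ α ∧
    ∀ x ∈ α, ∀ y ∈ Set.Icc (0:ℝ) 1, x ≤ y → y ∈ α

/-- The mirror image of α. -/
def mirror (α : Set ℝ) : Set ℝ := {x ∈ Set.Icc (0:ℝ) 1 | 1 - x ∈ α}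

/-- The dual of α. -/
def dual (α : Set ℝ) : Set ℝ := Set.Icc (0:ℝ) 1 \ mirror α

/-- Conjunction of a finite set of formulas. -/
noncomputable def conj (Γ : Finset Fml) : Fml := Γ.toList.foldr Fml.and (Fml.neg Fml.bot)

/-- Disjunction of a finite set of formulas. -/
noncomputable def disj (Δ : Finset Fml) : Fml := Δ.toList.foldr Fml.or Fml.bot

/-- Disjunction of a list of formulas. -/
def disjList (l : List Fml) : Fml := l.foldr Fml.or Fml.bot

/-- α-preservation validity (over probability distributions). -/
def PresValid (α : Set ℝ) (Γ Δ : Finset Fml) : Prop :=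
  ∀ P : ProbDist, (∀ γ ∈ Γ, P.p γ ∈ α) → ∃ δ ∈ Δ, P.p δ ∈ α

/-- α-preservation validity (over probabilistic models). -/
def PresValidM (α : Set ℝ) (Γ Δ : Finset Fml) : Prop :=
  ∀ M : PModel, (∀ γ ∈ Γ, M.prob γ ∈ α) → ∃ δ ∈ Δ, M.prob δ ∈ α

/-- α-symmetric validity. -/
def SymValid (α : Set ℝ) (Γ Δ : Finset Fml) : Prop :=
  ∀ P : ProbDist, (∀ γ ∈ Γ, P.p γ ∈ α) → ∃ δ ∈ Δ, P.p δ ∉ mirror α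

/-- α-satisfiability of a finite set of formulas. -/
def Satis (α : Set ℝ) (Γ : Finset Fml) : Prop :=
  ∃ P : ProbDist, ∀ γ ∈ Γ, P.p γ ∈ α

/-! Averaging over all `n`-element subsets: each `φ i` lies in a fraction `n / m` of them, so the
mean probability of an `n`-fold disjunction is `n / m` times `∑ i, P (φ i) ≤ 1`, and it cannot
exceed `n / m` for every subset. -/

open Finset Function

lemma Finset.card_mul_card_filter_mem_powersetCard {α : Type*} [Fintype α] [DecidableEq α]
    (n : ℕ) (a : α) :
    Fintype.card α * #{s ∈ powersetCard n univ | a ∈ s} = (Fintype.card α).choose n * n := by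
  cases n with
  | zero => simp
  | succ k =>
    obtain ⟨c, hc⟩ := Nat.exists_eq_add_one.2 (Fintype.card_pos_iff.2 ⟨a⟩)
    have hcount := card_filter_powersetCard_subset {a} univ (k + 1) (subset_univ _) (by simp)
    simp only [singleton_subset_iff, card_univ, card_singleton] at hcount
    rw [hcount, hc, Nat.add_sub_cancel, Nat.add_sub_cancel, Nat.add_one_mul_choose_eq]

theorem Finset.card_mul_sum_powersetCard_sum {α R : Type*} [Fintype α] [CommSemiring R]
    (n : ℕ) (f : α → R) :
    (Fintype.card α : R) * ∑ s ∈ powersetCard n univ, ∑ a ∈ s, f a =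
      ((Fintype.card α).choose n * n : ℕ) * ∑ a, f a := by
  classical
  rw [sum_comm' (t' := univ) (s' := fun a => {s ∈ powersetCard n univ | a ∈ s})
    (fun s a => by simp), mul_sum, mul_sum]
  refine sum_congr rfl fun a _ => ?_
  rw [sum_const, nsmul_eq_mul, ← mul_assoc, ← Nat.cast_mul,
    card_mul_card_filter_mem_powersetCard]

lemma eval_disjList (v : ℕ → Bool) (l : List Fml) :
    (disjList l).eval v = l.any (·.eval v) := by
  induction l with
  | nil => simp [disjList, Fml.bot, Fml.and, Fml.eval]
  | cons φ l ih => simp [disjList, Fml.eval, ← ih]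

lemma Incompatible.disjList_right {χ : Fml} {l : List Fml} (h : ∀ ψ ∈ l, Incompatible χ ψ) :
    Incompatible χ (disjList l) := by
  rintro v ⟨hχ, hl⟩
  obtain ⟨ψ, hψ, hψv⟩ := List.any_eq_true.1 ((eval_disjList v l).symm.trans hl)
  exact h ψ hψ v ⟨hχ, hψv⟩

namespace ProbDist

lemma p_disjList (P : ProbDist) {l : List Fml} (hl : l.Pairwise Incompatible) :
    P.p (disjList l) = (l.map P.p).sum := by
  induction l with
  | nil => exact P.bot_eq
  | cons φ l ih =>
    obtain ⟨hφ, hl⟩ := List.pairwise_cons.1 hl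
    rw [List.map_cons, List.sum_cons, ← ih hl]
    exact P.add_eq φ (disjList l) (Incompatible.disjList_right hφ)

lemma p_disjList_map_toList {ι : Type*} (P : ProbDist) {φ : ι → Fml}
    (hφ : Pairwise (Incompatible on φ)) (s : Finset ι) :
    P.p (disjList (s.toList.map φ)) = ∑ i ∈ s, P.p (φ i) := by
  rw [P.p_disjList ((s.nodup_toList.pairwise_of_forall_ne fun i _ j _ hij => hφ hij).map φ
    fun _ _ h => h), List.map_map]
  exact sum_map_toList s (P.p ∘ φ)

end ProbDist

theorem stmt12_general (m n : ℕ) (hnm : n < m) (φ : Fin m → Fml)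
    (hpair : ∀ i j, i ≠ j → Incompatible (φ i) (φ j)) (P : ProbDist)
    (hbig : ∀ s : Finset (Fin m), s.card = n →
      ((n:ℝ)/(m:ℝ)) < P.p (disjList (s.toList.map φ))) :
    False := by
  have hφ : Pairwise (Incompatible on φ) := fun i j => hpair i j
  have hm : (0 : ℝ) < m := by exact_mod_cast (Nat.zero_le n).trans_lt hnm
  have htotal : ∑ i, P.p (φ i) ≤ 1 := P.p_disjList_map_toList hφ univ ▸ P.le_one _
  have hsubsets : (powersetCard n (univ : Finset (Fin m))).Nonempty :=
    powersetCard_nonempty.2 (by simpa using hnm.le)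
  have hlower : (m.choose n : ℝ) * (n / m) <
      ∑ s ∈ powersetCard n univ, ∑ i ∈ s, P.p (φ i) := by
    have := sum_lt_sum_of_nonempty hsubsets fun s hs =>
      P.p_disjList_map_toList hφ s ▸ hbig s (mem_powersetCard.1 hs).2
    simpa using this
  have hmean := card_mul_sum_powersetCard_sum n fun i => P.p (φ i)
  have hexceeds : (m.choose n * n : ℝ) < m.choose n * n * ∑ i, P.p (φ i) := by
    calc (m.choose n * n : ℝ) = m * (m.choose n * (n / m)) := by field_simp
      _ < m * ∑ s ∈ powersetCard n univ, ∑ i ∈ s, P.p (φ i) := by gcongr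
      _ = _ := by simpa using hmean
  exact hexceeds.not_ge (mul_le_of_le_one_right (by positivity) htotal)

/-- given m pairwise inconsistent formulas, no probability
distribution gives every disjunction of n distinct ones probability > n/m. -/
theorem stmt12 (m n : ℕ) (h0 : 0 < n) (hnm : n < m) (φ : Fin m → Fml)
    (hpair : ∀ i j, i ≠ j → Incompatible (φ i) (φ j)) (P : ProbDist)
    (hbig : ∀ s : Finset (Fin m), s.card = n →
      ((n:ℝ)/(m:ℝ)) < P.p (disjList (s.toList.map φ))) :
    False :=
  stmt12_general m n hnm φ hpair P hbig
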